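/- arXiv:1507.08246 — 2 statements merged into one kernel-verified Lean document; each statement's English description precedes it below -/
import Mathlib

section
/- Let σ ∈ (0,1) and suppose u, v : (0,T] → [0,∞) are differentiable and satisfy, for some constant N > 0: (d/dt)(u/t^{1+σ}) ≤ −((1+σ)/t^{2+σ})(1 − N t^σ) u + (N/t^{1+σ}) v and (d/dt)(v/t^σ) ≤ −(σ/(2 t^{1+σ}))(1 − N t^σ) v + (N/t^{2−σ}) u. Then there exist a = a(σ, N) > 0 and T'' = T''(σ, N) > 0 such that E(t) := a v(t)/t^σ + u(t)/t^{1+σ} satisfies E′(t) ≤ 0 on (0, min{T, T''}]. In particular, if additionally lim_{t→0⁺} E(t) = 0, then u ≡ v ≡ 0 on (0, min{T, T''}]. -/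
/-!
With `x = N t^σ` and `a = 4N/σ`, adding `a` times the second inequality to the first gives
`E' ≤ N (2x - 1) v / t^{1+σ} + ((4/σ) x² - (1+σ)(1-x)) u / t^{2+σ}`,
and both coefficients are nonpositive once `x ≤ min (1/2) (σ/8)`, i.e. for `t` small in terms of
`σ` and `N`. So `E` is nonincreasing on `(0, min T T'']`; being nonnegative with limit `0` at `0⁺`,
it vanishes there, and so do `u` and `v`.
-/

open Filter Set Topology

namespace WeightedEnergy

noncomputable def energy (σ a : ℝ) (u v : ℝ → ℝ) (s : ℝ) : ℝ :=
  a * v s / s ^ σ + u s / s ^ (1 + σ)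

theorem differentiableAt_div_rpow {f : ℝ → ℝ} {t : ℝ} (p : ℝ) (hf : DifferentiableAt ℝ f t)
    (ht : 0 < t) : DifferentiableAt ℝ (fun s => f s / s ^ p) t :=
  hf.div (Real.differentiableAt_rpow_const_of_ne p ht.ne') (Real.rpow_pos_of_pos ht p).ne'

section Energy

variable {σ a t : ℝ} {u v : ℝ → ℝ}

theorem energy_eq : energy σ a u v = fun s => a * (v s / s ^ σ) + u s / s ^ (1 + σ) := by
  funext s
  simp only [energy, mul_div_assoc]

theorem differentiableAt_energy (hu : DifferentiableAt ℝ u t) (hv : DifferentiableAt ℝ v t)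
    (ht : 0 < t) : DifferentiableAt ℝ (energy σ a u v) t := by
  rw [energy_eq]
  exact ((differentiableAt_div_rpow σ hv ht).const_mul a).add (differentiableAt_div_rpow _ hu ht)

theorem deriv_energy (hu : DifferentiableAt ℝ u t) (hv : DifferentiableAt ℝ v t) (ht : 0 < t) :
    deriv (energy σ a u v) t =
      a * deriv (fun s => v s / s ^ σ) t + deriv (fun s => u s / s ^ (1 + σ)) t := by
  rw [energy_eq, deriv_fun_add ((differentiableAt_div_rpow σ hv ht).const_mul a)
    (differentiableAt_div_rpow _ hu ht), deriv_const_mul a (differentiableAt_div_rpow σ hv ht)]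

theorem energy_nonneg (ha : 0 ≤ a) (ht : 0 < t) (hu : 0 ≤ u t) (hv : 0 ≤ v t) :
    0 ≤ energy σ a u v t := by
  unfold energy
  have := Real.rpow_pos_of_pos ht σ
  have := Real.rpow_pos_of_pos ht (1 + σ)
  positivity

theorem eq_zero_of_energy_eq_zero (ha : 0 < a) (ht : 0 < t) (hu : 0 ≤ u t) (hv : 0 ≤ v t)
    (hE : energy σ a u v t = 0) : u t = 0 ∧ v t = 0 := by
  have hσ := Real.rpow_pos_of_pos ht σ
  have h1σ := Real.rpow_pos_of_pos ht (1 + σ)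
  have hvt : 0 ≤ a * v t / t ^ σ := by positivity
  have hut : 0 ≤ u t / t ^ (1 + σ) := by positivity
  unfold energy at hE
  constructor
  · have : u t / t ^ (1 + σ) = 0 := by linarith
    simpa [h1σ.ne'] using this
  · have : a * v t / t ^ σ = 0 := by linarith
    simpa [ha.ne', hσ.ne'] using this

end Energy

theorem combination_le_zero {σ N t U V Du Dv : ℝ} (hσ : 0 < σ) (hN : 0 ≤ N) (ht : 0 < t)
    (hsmall : N * t ^ σ ≤ min (1 / 2) (σ / 8)) (hU : 0 ≤ U) (hV : 0 ≤ V)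
    (hDu : Du ≤ -((1 + σ) / t ^ (2 + σ)) * (1 - N * t ^ σ) * U + (N / t ^ (1 + σ)) * V)
    (hDv : Dv ≤ -(σ / (2 * t ^ (1 + σ))) * (1 - N * t ^ σ) * V + (N / t ^ (2 - σ)) * U) :
    4 * N / σ * Dv + Du ≤ 0 := by
  set s := t ^ σ
  set x := N * s with hx
  have hs0 : 0 < s := Real.rpow_pos_of_pos ht σ
  have hx0 : 0 ≤ x := by positivity
  have hx2 : x ≤ 1 / 2 := hsmall.trans (min_le_left _ _)
  have hx8 : x ≤ σ / 8 := hsmall.trans (min_le_right _ _)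
  have h1 : t ^ (1 + σ) = t * s := by rw [Real.rpow_add ht, Real.rpow_one]
  have h2 : t ^ (2 + σ) = t ^ 2 * s := by rw [Real.rpow_add ht, Real.rpow_two]
  have h3 : t ^ (2 - σ) = t ^ 2 / s := by rw [Real.rpow_sub ht, Real.rpow_two]
  have hcombine :
      4 * N / σ * (-(σ / (2 * t ^ (1 + σ))) * (1 - x) * V + (N / t ^ (2 - σ)) * U) +
          (-((1 + σ) / t ^ (2 + σ)) * (1 - x) * U + (N / t ^ (1 + σ)) * V) =
        N * (2 * x - 1) / (t * s) * V + (4 / σ * x ^ 2 - (1 + σ) * (1 - x)) / (t ^ 2 * s) * U := by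
    rw [h1, h2, h3, hx]
    field_simp
    ring
  have hcoeffV : N * (2 * x - 1) / (t * s) ≤ 0 :=
    div_nonpos_of_nonpos_of_nonneg (mul_nonpos_of_nonneg_of_nonpos hN (by linarith))
      (by positivity)
  -- `x ≤ σ/8` makes the quadratic term at most `x/2 ≤ 1/4`, while `(1+σ)(1-x) ≥ 1/2`.
  have hquad : 4 / σ * x ^ 2 ≤ x / 2 := by
    rw [div_mul_eq_mul_div, div_le_div_iff₀ hσ two_pos]
    nlinarith
  have hcoeffU : (4 / σ * x ^ 2 - (1 + σ) * (1 - x)) / (t ^ 2 * s) ≤ 0 :=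
    div_nonpos_of_nonpos_of_nonneg (by nlinarith) (by positivity)
  have ha : 0 ≤ 4 * N / σ := by positivity
  calc 4 * N / σ * Dv + Du
      ≤ 4 * N / σ * (-(σ / (2 * t ^ (1 + σ))) * (1 - x) * V + (N / t ^ (2 - σ)) * U) +
          (-((1 + σ) / t ^ (2 + σ)) * (1 - x) * U + (N / t ^ (1 + σ)) * V) :=
        add_le_add (mul_le_mul_of_nonneg_left hDv ha) hDu
    _ = _ := hcombine
    _ ≤ 0 := add_nonpos (mul_nonpos_of_nonpos_of_nonneg hcoeffV hV)
        (mul_nonpos_of_nonpos_of_nonneg hcoeffU hU)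

theorem le_zero_of_antitoneOn_Ioc_of_tendsto {E : ℝ → ℝ} {b t : ℝ}
    (hE : AntitoneOn E (Ioc 0 b)) (hlim : Tendsto E (𝓝[>] 0) (𝓝 0)) (ht : t ∈ Ioc 0 b) :
    E t ≤ 0 := by
  refine ge_of_tendsto hlim ?_
  filter_upwards [Ioc_mem_nhdsGT ht.1] with s hs
  exact hE ⟨hs.1, hs.2.trans ht.2⟩ ht hs.2

theorem antitoneOn_Ioc_of_deriv_nonpos {E : ℝ → ℝ} {b : ℝ}
    (hdiff : ∀ t ∈ Ioc 0 b, DifferentiableAt ℝ E t) (hderiv : ∀ t ∈ Ioc 0 b, deriv E t ≤ 0) :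
    AntitoneOn E (Ioc 0 b) := by
  have hdiffOn : DifferentiableOn ℝ E (Ioc 0 b) := fun t ht => (hdiff t ht).differentiableWithinAt
  exact antitoneOn_of_deriv_nonpos (convex_Ioc 0 b) hdiffOn.continuousOn
    (hdiffOn.mono interior_subset) fun t ht => hderiv t (interior_subset ht)

end WeightedEnergy

open WeightedEnergy in
/-- ODE skeleton of the weighted energy argument: if nonnegative
differentiable `u, v` on `(0,T]` satisfy
`(d/dt)(u/t^{1+σ}) ≤ −((1+σ)/t^{2+σ})(1 − N t^σ) u + (N/t^{1+σ}) v` and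
`(d/dt)(v/t^σ) ≤ −(σ/(2t^{1+σ}))(1 − N t^σ) v + (N/t^{2−σ}) u`, then there exist
`a = a(σ,N) > 0` and `T'' = T''(σ,N) > 0` such that
`E(t) = a v(t)/t^σ + u(t)/t^{1+σ}` satisfies `E′ ≤ 0` on `(0, min T T'']`; and if in
addition `E(t) → 0` as `t → 0⁺`, then `u ≡ v ≡ 0` there. -/
theorem stmt_11 (σ N : ℝ) (hσ : σ ∈ Set.Ioo (0:ℝ) 1) (hN : 0 < N) :
    ∃ a > (0:ℝ), ∃ T'' > (0:ℝ), ∀ (T : ℝ) (_ : 0 < T) (u v : ℝ → ℝ),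
      (∀ t ∈ Set.Ioc (0:ℝ) T, 0 ≤ u t ∧ 0 ≤ v t) →
      (∀ t ∈ Set.Ioc (0:ℝ) T, DifferentiableAt ℝ u t ∧ DifferentiableAt ℝ v t) →
      (∀ t ∈ Set.Ioc (0:ℝ) T,
        deriv (fun s => u s / s ^ (1 + σ)) t ≤
          -((1 + σ) / t ^ (2 + σ)) * (1 - N * t ^ σ) * u t + (N / t ^ (1 + σ)) * v t) →
      (∀ t ∈ Set.Ioc (0:ℝ) T,
        deriv (fun s => v s / s ^ σ) t ≤
          -(σ / (2 * t ^ (1 + σ))) * (1 - N * t ^ σ) * v t + (N / t ^ (2 - σ)) * u t) →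
      (∀ t ∈ Set.Ioc (0:ℝ) (min T T''),
          deriv (fun s => a * v s / s ^ σ + u s / s ^ (1 + σ)) t ≤ 0) ∧
      (Tendsto (fun s => a * v s / s ^ σ + u s / s ^ (1 + σ))
          (nhdsWithin 0 (Set.Ioi 0)) (nhds 0) →
        ∀ t ∈ Set.Ioc (0:ℝ) (min T T''), u t = 0 ∧ v t = 0) := by
  obtain ⟨hσ0, -⟩ := hσ
  set ε := min (1 / 2) (σ / 8)
  set a := 4 * N / σ
  have ha : 0 < a := by positivity
  set T'' := (ε / N) ^ σ⁻¹
  refine ⟨a, ha, T'', by positivity, ?_⟩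
  intro T _ u v hpos hdiff hu hv
  have hsmall : ∀ t ∈ Ioc 0 (min T T''), t ∈ Ioc 0 T ∧ N * t ^ σ ≤ ε := fun t ht =>
    ⟨⟨ht.1, ht.2.trans (min_le_left _ _)⟩, by
      rw [← le_div_iff₀' hN, ← Real.le_rpow_inv_iff_of_pos ht.1.le (by positivity) hσ0]
      exact ht.2.trans (min_le_right _ _)⟩
  have hdiffE : ∀ t ∈ Ioc 0 (min T T''), DifferentiableAt ℝ (energy σ a u v) t :=
    fun t ht => differentiableAt_energy (hdiff t (hsmall t ht).1).1 (hdiff t (hsmall t ht).1).2 ht.1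
  have hderiv : ∀ t ∈ Ioc 0 (min T T''), deriv (energy σ a u v) t ≤ 0 := by
    intro t ht
    obtain ⟨htT, htε⟩ := hsmall t ht
    rw [deriv_energy (hdiff t htT).1 (hdiff t htT).2 ht.1]
    exact combination_le_zero hσ0 hN.le ht.1 htε (hpos t htT).1 (hpos t htT).2
      (hu t htT) (hv t htT)
  refine ⟨hderiv, fun hlim t ht => ?_⟩
  have hE := le_zero_of_antitoneOn_Ioc_of_tendsto (antitoneOn_Ioc_of_deriv_nonpos hdiffE hderiv)
    hlim ht
  obtain ⟨hu0, hv0⟩ := hpos t (hsmall t ht).1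
  exact eq_zero_of_energy_eq_zero ha ht.1 hu0 hv0
    (le_antisymm hE (energy_nonneg ha.le ht.1 hu0 hv0))
end

section
/- Let σ ∈ (0,1) and let w : (0,T] → [0,∞) be differentiable satisfying w′(t) ≤ −(c/t^{1+σ}) w(t) + C t^{σ−1} for constants c, C > 0, with lim sup_{t→0⁺} w(t) < ∞. Then lim_{t→0⁺} w(t) = 0. -/
open Filter Set Topology Real

/-!
With `K = C / c`, the excess `u t = w t - K t ^ (2σ)` satisfies `u' ≤ -(c / t ^ (1 + σ)) u`.
The integrating factor `exp (-(c / σ) t ^ (-σ))` makes `exp (-(c / σ) t ^ (-σ)) u t`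
nonincreasing on `(0, T]`; as the factor vanishes at `0⁺` and `u` is bounded above there, this
product is `≤ 0`. Hence `0 ≤ w t ≤ K t ^ (2σ) → 0`.
-/

theorem nonpos_of_hasDerivAt_le_neg_mul {T : ℝ} {φ m u u' : ℝ → ℝ}
    (hφ : ∀ t ∈ Ioc 0 T, HasDerivAt φ (m t) t) (hφ0 : Tendsto φ (𝓝[>] 0) atBot)
    (hu : ∀ t ∈ Ioc 0 T, HasDerivAt u (u' t) t) (hineq : ∀ t ∈ Ioc 0 T, u' t ≤ -m t * u t)
    (hbd : ∃ B, ∀ᶠ t in 𝓝[>] 0, u t ≤ B) :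
    ∀ t ∈ Ioc 0 T, u t ≤ 0 := by
  have hg : ∀ t ∈ Ioc 0 T,
      HasDerivAt (fun s ↦ exp (φ s) * u s) (exp (φ t) * (m t * u t + u' t)) t := fun t ht ↦
    ((hφ t ht).exp.mul (hu t ht)).congr_deriv (by ring)
  have hanti : AntitoneOn (fun s ↦ exp (φ s) * u s) (Ioc 0 T) :=
    antitoneOn_of_hasDerivWithinAt_nonpos (convex_Ioc 0 T)
      (fun t ht ↦ (hg t ht).continuousAt.continuousWithinAt)
      (fun t ht ↦ (hg t (interior_subset ht)).hasDerivWithinAt)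
      (fun t ht ↦ mul_nonpos_of_nonneg_of_nonpos (exp_pos _).le
        (by linarith [hineq t (interior_subset ht)]))
  intro t ht
  obtain ⟨B, hB⟩ := hbd
  have hlim : Tendsto (fun s ↦ exp (φ s) * B) (𝓝[>] 0) (𝓝 0) := by
    simpa using (tendsto_exp_atBot.comp hφ0).mul_const B
  have hprod : exp (φ t) * u t ≤ 0 := by
    refine ge_of_tendsto hlim ?_
    filter_upwards [Ioo_mem_nhdsGT ht.1, hB] with s hs hus
    calc exp (φ t) * u t ≤ exp (φ s) * u s := hanti ⟨hs.1, hs.2.le.trans ht.2⟩ ht hs.2.le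
      _ ≤ exp (φ s) * B := by gcongr
  exact nonpos_of_mul_nonpos_right hprod (exp_pos _)

theorem hasDerivAt_neg_div_mul_rpow_neg {c σ t : ℝ} (hσ : σ ≠ 0) (ht : 0 < t) :
    HasDerivAt (fun s ↦ -(c / σ) * s ^ (-σ)) (c / t ^ (1 + σ)) t :=
  ((hasDerivAt_rpow_const (Or.inl ht.ne')).const_mul _).congr_deriv <| by
    rw [show -σ - 1 = -(1 + σ) by ring, rpow_neg ht.le]
    field_simp

theorem sub_rpow_deriv_le_neg_div_rpow_mul {σ c C t x x' : ℝ} (hσ : 0 ≤ σ) (hc : 0 < c)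
    (hC : 0 ≤ C) (ht : 0 < t) (h : x' ≤ -(c / t ^ (1 + σ)) * x + C * t ^ (σ - 1)) :
    x' - C / c * (2 * σ * t ^ (2 * σ - 1)) ≤ -(c / t ^ (1 + σ)) * (x - C / c * t ^ (2 * σ)) := by
  have hpow : c / t ^ (1 + σ) * (C / c * t ^ (2 * σ)) = C * t ^ (σ - 1) := by
    rw [show σ - 1 = 2 * σ - (1 + σ) by ring, rpow_sub ht]
    field_simp
  have : 0 ≤ C / c * (2 * σ * t ^ (2 * σ - 1)) := by positivity
  linarith

theorem tendsto_rpow_nhdsGT_zero {p : ℝ} (hp : 0 < p) :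
    Tendsto (fun t : ℝ ↦ t ^ p) (𝓝[>] 0) (𝓝 0) := by
  simpa [zero_rpow hp.ne'] using
    (continuousAt_rpow_const 0 p (Or.inr hp.le)).tendsto.mono_left nhdsWithin_le_nhds

/-- Singular ODE comparison: if `w ≥ 0` on `(0,T]` satisfies
`w′(t) ≤ −(c/t^{1+σ}) w(t) + C t^{σ−1}` with `c, C > 0` and `w` is bounded near
`0⁺`, then `w(t) → 0` as `t → 0⁺`. -/
theorem stmt_19 (σ T c C : ℝ) (hσ : σ ∈ Set.Ioo (0:ℝ) 1) (hT : 0 < T)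
    (hc : 0 < c) (hC : 0 < C) (w w' : ℝ → ℝ)
    (hw0 : ∀ t ∈ Set.Ioc (0:ℝ) T, 0 ≤ w t)
    (hderiv : ∀ t ∈ Set.Ioc (0:ℝ) T, HasDerivAt w (w' t) t)
    (hineq : ∀ t ∈ Set.Ioc (0:ℝ) T, w' t ≤ -(c / t ^ (1 + σ)) * w t + C * t ^ (σ - 1))
    (hbd : ∃ B : ℝ, ∀ᶠ t in nhdsWithin 0 (Set.Ioi 0), w t ≤ B) :
    Tendsto w (nhdsWithin 0 (Set.Ioi 0)) (nhds 0) := by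
  obtain ⟨hσ0, -⟩ := hσ
  have hexcess : ∀ t ∈ Ioc 0 T, w t - C / c * t ^ (2 * σ) ≤ 0 :=
    nonpos_of_hasDerivAt_le_neg_mul (fun t ht ↦ hasDerivAt_neg_div_mul_rpow_neg hσ0.ne' ht.1)
      ((tendsto_rpow_neg_nhdsGT_zero (neg_lt_zero.2 hσ0)).const_mul_atTop_of_neg
        (neg_lt_zero.2 (div_pos hc hσ0)))
      (fun t ht ↦ (hderiv t ht).sub ((hasDerivAt_rpow_const (Or.inl ht.1.ne')).const_mul _))
      (fun t ht ↦ sub_rpow_deriv_le_neg_div_rpow_mul hσ0.le hc hC.le ht.1 (hineq t ht))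
      (hbd.imp fun B hB ↦ by
        filter_upwards [hB, self_mem_nhdsWithin] with t hwt (ht : 0 < t)
        have : 0 ≤ C / c * t ^ (2 * σ) := by positivity
        linarith)
  have hnear : ∀ᶠ t in 𝓝[>] 0, t ∈ Ioc 0 T := Ioc_mem_nhdsGT hT
  refine tendsto_of_tendsto_of_tendsto_of_le_of_le' tendsto_const_nhds
    (by simpa using (tendsto_rpow_nhdsGT_zero (by positivity : 0 < 2 * σ)).const_mul (C / c))
    (hnear.mono hw0) (hnear.mono fun t ht ↦ sub_nonpos.1 (hexcess t ht))
end
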